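/- arXiv:1311.0777 — 5 statements merged into one kernel-verified Lean document; each statement's English description precedes it below -/
import Mathlib

section
/- Let J ≥ 1, let B₀ = 0 < B₁ < ⋯ < B_J be real numbers, and let b₀, …, b_J be complex numbers with b₀ ≠ 0 and b_J ≠ 0, and let Φ(ρ) = ∑_{j=0}^{J} b_j e^{ρ B_j}. Then for every δ > 0 there exists ε > 0 such that every ρ ∈ ℂ whose distance to the zero set of Φ is at least δ satisfies |Φ(ρ)| ≥ ε (away from its zeros, the exponential sum is uniformly bounded from zero). -/
/-!
Outside a vertical strip `|Re ρ| ≤ A` the sum is dominated by its first term (as `Re ρ → -∞`)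
or by its last term (as `Re ρ → +∞`), so `|Φ|` is bounded below there. Inside the strip, write
`ρ = x + iy`: then `Φ(z + iy) = ∑ b_j w_j e^{z B_j}` with `w_j = e^{i y B_j}` on the unit torus,
so the translates of `Φ` form a continuous family `F w` of entire functions, indexed by a compact
set, none of them identically zero. Near `(w₀, x₀)`, pick a small circle around `x₀` on which
`F w₀` has no zeros; nearby `F w` stay above half the minimum of `|F w₀|` on that circle, and if
`F w` has no zeros in the disc, the minimum modulus principle carries the bound inside.
Compactness makes the bound uniform.
-/

open Complex Finset Filter Metric Topology Function

theorem Complex.le_norm_of_forall_mem_frontier_le_norm {E : Type*} [NormedAddCommGroup E]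
    [NormedSpace ℂ E] [Nontrivial E] {f : E → ℂ} {U : Set E} (hU : Bornology.IsBounded U)
    (hd : DiffContOnCl ℂ f U) (hf : ∀ z ∈ closure U, f z ≠ 0) {m : ℝ}
    (hm : ∀ z ∈ frontier U, m ≤ ‖f z‖) {z : E} (hz : z ∈ closure U) : m ≤ ‖f z‖ := by
  rcases le_or_gt m 0 with hm0 | hm0
  · exact hm0.trans (norm_nonneg _)
  have hinv : ‖(f z)⁻¹‖ ≤ m⁻¹ := norm_le_of_forall_mem_frontier_norm_le hU (hd.inv hf)
    (fun w hw => by rw [Pi.inv_apply, norm_inv]; exact inv_anti₀ hm0 (hm w hw)) hz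
  rwa [norm_inv, inv_le_inv₀ (norm_pos_iff.2 (hf z hz)) hm0] at hinv

theorem exists_pos_eventually_le_norm_of_zeroFree_ball {P : Type*} [TopologicalSpace P]
    {F : P → ℂ → ℂ} (hFc : Continuous (uncurry F)) (hFd : ∀ w, Differentiable ℂ (F w))
    {w₀ : P} (hw₀ : F w₀ ≠ 0) (x₀ : ℂ) {δ : ℝ} (hδ : 0 < δ) :
    ∃ ε > 0, ∀ᶠ p in 𝓝 (w₀, x₀), (∀ z ∈ ball p.2 δ, F p.1 z ≠ 0) → ε ≤ ‖F p.1 p.2‖ := by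
  have hiso : ∀ᶠ z in 𝓝[≠] x₀, F w₀ z ≠ 0 := by
    refine ((hFd w₀).analyticAt x₀).eventually_eq_zero_or_eventually_ne_zero.resolve_left
      fun h => hw₀ (funext fun z => ?_)
    exact AnalyticOnNhd.eqOn_zero_of_preconnected_of_eventuallyEq_zero
      (fun z _ => (hFd w₀).analyticAt z) isPreconnected_univ (Set.mem_univ x₀) h (Set.mem_univ z)
  obtain ⟨r₁, hr₁, hball⟩ := Metric.eventually_nhds_iff_ball.1 (eventually_nhdsWithin_iff.1 hiso)
  set r := min (r₁ / 2) (δ / 2)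
  have hr : 0 < r := lt_min (half_pos hr₁) (half_pos hδ)
  have hsphere : ∀ z ∈ sphere x₀ r, F w₀ z ≠ 0 := fun z hz =>
    hball z (by rw [mem_ball, mem_sphere.1 hz]; linarith [min_le_left (r₁ / 2) (δ / 2)])
      (ne_of_mem_sphere hz hr.ne')
  obtain ⟨z₀, hz₀, hmin⟩ := (isCompact_sphere x₀ r).exists_isMinOn
    (NormedSpace.sphere_nonempty.2 hr.le) (hFd w₀).continuous.norm.continuousOn
  set m := ‖F w₀ z₀‖
  have hm : 0 < m := norm_pos_iff.2 (hsphere z₀ hz₀)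
  have hnear : ∀ᶠ w in 𝓝 w₀, ∀ z ∈ sphere x₀ r, m / 2 < ‖F w z‖ :=
    (isCompact_sphere x₀ r).eventually_forall_of_forall_eventually fun z hz =>
      (hFc.norm.tendsto (w₀, z)).eventually_const_lt ((half_lt_self hm).trans_le (hmin hz))
  refine ⟨m / 2, half_pos hm, ?_⟩
  rw [nhds_prod_eq]
  filter_upwards [hnear.prod_mk (ball_mem_nhds x₀ hr)] with ⟨w, x⟩ ⟨hw, hx⟩ hzero
  have hsub : closedBall x₀ r ⊆ ball x δ := fun z hz => by
    rw [mem_closedBall] at hz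
    rw [mem_ball]
    linarith [dist_triangle_right z x x₀, min_le_right (r₁ / 2) (δ / 2)]
  refine Complex.le_norm_of_forall_mem_frontier_le_norm isBounded_ball (hFd w).diffContOnCl
    (fun z hz => hzero z (hsub (closure_ball x₀ hr.ne' ▸ hz)))
    (fun z hz => (hw z (frontier_ball x₀ hr.ne' ▸ hz)).le) (subset_closure hx)

theorem IsCompact.exists_pos_forall_le_norm_of_zeroFree_ball {P : Type*} [TopologicalSpace P]
    {F : P → ℂ → ℂ} {K : Set (P × ℂ)} (hK : IsCompact K) (hFc : Continuous (uncurry F))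
    (hFd : ∀ w, Differentiable ℂ (F w)) (hKF : ∀ p ∈ K, F p.1 ≠ 0) {δ : ℝ} (hδ : 0 < δ) :
    ∃ ε > 0, ∀ p ∈ K, (∀ z ∈ ball p.2 δ, F p.1 z ≠ 0) → ε ≤ ‖F p.1 p.2‖ := by
  refine hK.induction_on (p := fun S => ∃ ε > 0, ∀ p ∈ S,
    (∀ z ∈ ball p.2 δ, F p.1 z ≠ 0) → ε ≤ ‖F p.1 p.2‖) ⟨1, one_pos, by simp⟩ ?_ ?_ ?_
  · rintro S T hST ⟨ε, hε, h⟩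
    exact ⟨ε, hε, fun p hp => h p (hST hp)⟩
  · rintro S T ⟨ε, hε, h⟩ ⟨ε', hε', h'⟩
    refine ⟨min ε ε', lt_min hε hε', fun p hp hzero => ?_⟩
    rcases hp with hp | hp
    · exact (min_le_left _ _).trans (h p hp hzero)
    · exact (min_le_right _ _).trans (h' p hp hzero)
  · intro p hp
    obtain ⟨ε, hε, hev⟩ := exists_pos_eventually_le_norm_of_zeroFree_ball hFc hFd (hKF p hp) p.2 hδ
    exact ⟨_, mem_nhdsWithin_of_mem_nhds hev, ε, hε, fun q hq => hq⟩

theorem exists_le_norm_sum_exp_of_lt {ι : Type*} (s : Finset ι) (a : ι → ℂ) (E : ι → ℝ) {k : ι}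
    (hk : k ∈ s) (hak : a k ≠ 0) (hE : ∀ j ∈ s, j ≠ k → E j < E k) :
    ∃ A, ∀ z : ℂ, A ≤ z.re →
      ‖a k‖ / 2 * Real.exp (z.re * E k) ≤ ‖∑ j ∈ s, a j * exp (z * E j)‖ := by
  classical
  have htail : Tendsto (fun x : ℝ => ∑ j ∈ s.erase k, ‖a j‖ * Real.exp (x * (E j - E k)))
      atTop (𝓝 0) := by
    rw [← sum_const_zero (s := s.erase k)]
    refine tendsto_finsetSum _ fun j hj => ?_
    have hj := mem_erase.1 hj
    have := tendsto_id.atTop_mul_const_of_neg (sub_neg.2 (hE j hj.2 hj.1))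
    simpa using (Real.tendsto_exp_atBot.comp this).const_mul ‖a j‖
  obtain ⟨A, hA⟩ := eventually_atTop.1 (htail.eventually_lt_const (half_pos (norm_pos_iff.2 hak)))
  refine ⟨A, fun z hz => ?_⟩
  have hnorm : ∀ j, ‖a j * exp (z * E j)‖ = ‖a j‖ * Real.exp (z.re * E j) := fun j => by
    rw [norm_mul, norm_exp, re_mul_ofReal]
  have htail_le : ‖∑ j ∈ s.erase k, a j * exp (z * E j)‖ ≤ ‖a k‖ / 2 * Real.exp (z.re * E k) :=
    calc ‖∑ j ∈ s.erase k, a j * exp (z * E j)‖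
        ≤ ∑ j ∈ s.erase k, ‖a j‖ * Real.exp (z.re * E j) :=
          (norm_sum_le _ _).trans_eq (sum_congr rfl fun j _ => hnorm j)
      _ = Real.exp (z.re * E k) * ∑ j ∈ s.erase k, ‖a j‖ * Real.exp (z.re * (E j - E k)) := by
          rw [mul_sum]
          refine sum_congr rfl fun j _ => ?_
          rw [mul_left_comm, ← Real.exp_add]
          ring_nf
      _ ≤ ‖a k‖ / 2 * Real.exp (z.re * E k) := by
          rw [mul_comm]; gcongr; exact (hA _ hz).le
  rw [← add_sum_erase s _ hk]
  calc ‖a k‖ / 2 * Real.exp (z.re * E k)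
      = ‖a k * exp (z * E k)‖ - ‖a k‖ / 2 * Real.exp (z.re * E k) := by rw [hnorm]; ring
    _ ≤ ‖a k * exp (z * E k)‖ - ‖∑ j ∈ s.erase k, a j * exp (z * E j)‖ := by gcongr
    _ ≤ _ := norm_sub_le_norm_add _ _

noncomputable def expSum (J : ℕ) (B : ℕ → ℝ) (a : ℕ → ℂ) (z : ℂ) : ℂ :=
  ∑ j ∈ range (J + 1), a j * exp (z * B j)

theorem differentiable_expSum (J : ℕ) (B : ℕ → ℝ) (a : ℕ → ℂ) :
    Differentiable ℂ (expSum J B a) := by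
  unfold expSum; fun_prop

theorem continuous_expSum_mul (J : ℕ) (B : ℕ → ℝ) (a : ℕ → ℂ) :
    Continuous fun p : (ℕ → ℂ) × ℂ => expSum J B (a * p.1) p.2 := by
  unfold expSum; fun_prop

theorem expSum_add_mul_I (J : ℕ) (B : ℕ → ℝ) (a : ℕ → ℂ) (z : ℂ) (y : ℝ) :
    expSum J B a (z + y * I) = expSum J B (a * fun j => exp ((y * B j : ℝ) * I)) z := by
  refine sum_congr rfl fun j _ => ?_
  rw [Pi.mul_apply, mul_assoc, ← exp_add]
  push_cast
  ring_nf

theorem exists_pos_le_norm_expSum_of_le_abs_re {J : ℕ} {B : ℕ → ℝ} {a : ℕ → ℂ} (hB0 : B 0 = 0)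
    (hB : StrictMonoOn B (Set.Iic J)) (ha0 : a 0 ≠ 0) (haJ : a J ≠ 0) :
    ∃ A c, 0 < c ∧ ∀ z : ℂ, A ≤ |z.re| → c ≤ ‖expSum J B a z‖ := by
  have hJ : J ∈ Set.Iic J := Set.mem_Iic.2 le_rfl
  have hmem : ∀ {j}, j ∈ range (J + 1) → j ∈ Set.Iic J := fun hj => Nat.lt_succ_iff.1 (mem_range.1 hj)
  obtain ⟨A₁, hright⟩ := exists_le_norm_sum_exp_of_lt _ a B (self_mem_range_succ J) haJ
    fun j hj hne => hB (hmem hj) hJ (lt_of_le_of_ne (hmem hj) hne)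
  obtain ⟨A₂, hleft⟩ := exists_le_norm_sum_exp_of_lt _ a (-B) (mem_range.2 J.succ_pos) ha0
    fun j hj hne => neg_lt_neg (hB (Nat.zero_le J) (hmem hj) (Nat.pos_of_ne_zero hne))
  have hBJ : 0 ≤ B J := hB0 ▸ hB.monotoneOn (Nat.zero_le J) hJ (Nat.zero_le J)
  refine ⟨max (max A₁ A₂) 0, min (‖a 0‖ / 2) (‖a J‖ / 2),
    lt_min (half_pos (norm_pos_iff.2 ha0)) (half_pos (norm_pos_iff.2 haJ)), fun z hz => ?_⟩
  rcases le_or_gt 0 z.re with hre | hre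
  · rw [abs_of_nonneg hre] at hz
    calc min (‖a 0‖ / 2) (‖a J‖ / 2) ≤ ‖a J‖ / 2 * Real.exp (z.re * B J) := by
          refine (min_le_right _ _).trans (le_mul_of_one_le_right (by positivity) ?_)
          exact Real.one_le_exp (mul_nonneg hre hBJ)
      _ ≤ ‖expSum J B a z‖ := hright z (le_of_max_le_left (le_of_max_le_left hz))
  · rw [abs_of_neg hre] at hz
    have h := hleft (-z) (by simpa using le_of_max_le_right (le_of_max_le_left hz))
    simp only [Pi.neg_apply, hB0, neg_zero, mul_zero, Real.exp_zero, mul_one, ofReal_neg,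
      neg_mul_neg] at h
    exact (min_le_left _ _).trans h

theorem expSum_ne_zero {J : ℕ} {B : ℕ → ℝ} {a : ℕ → ℂ} (hB0 : B 0 = 0)
    (hB : StrictMonoOn B (Set.Iic J)) (ha0 : a 0 ≠ 0) (haJ : a J ≠ 0) : expSum J B a ≠ 0 := by
  intro hzero
  obtain ⟨A, c, hc, h⟩ := exists_pos_le_norm_expSum_of_le_abs_re hB0 hB ha0 haJ
  have := h (|A| : ℝ) (by simpa using le_abs_self A)
  simp only [hzero, Pi.zero_apply, norm_zero] at this
  linarith

theorem exists_pos_le_norm_expSum_of_abs_re_le {J : ℕ} {B : ℕ → ℝ} {a : ℕ → ℂ} (hB0 : B 0 = 0)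
    (hB : StrictMonoOn B (Set.Iic J)) (ha0 : a 0 ≠ 0) (haJ : a J ≠ 0) (A : ℝ) {δ : ℝ}
    (hδ : 0 < δ) : ∃ ε > 0, ∀ ρ : ℂ, |ρ.re| ≤ A →
      (∀ z, expSum J B a z = 0 → δ ≤ dist ρ z) → ε ≤ ‖expSum J B a ρ‖ := by
  let T : Set (ℕ → ℂ) := Set.univ.pi fun _ => sphere 0 1
  have hT : ∀ w ∈ T, expSum J B (a * w) ≠ 0 := fun w hw =>
    have hw0 : ∀ j, w j ≠ 0 := fun j => ne_zero_of_mem_unit_sphere ⟨w j, hw j trivial⟩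
    expSum_ne_zero hB0 hB (mul_ne_zero ha0 (hw0 0)) (mul_ne_zero haJ (hw0 J))
  obtain ⟨ε, hε, hK⟩ := ((isCompact_univ_pi fun _ => isCompact_sphere 0 1).prod
    (isCompact_closedBall 0 A)).exists_pos_forall_le_norm_of_zeroFree_ball
    (F := fun w => expSum J B (a * w)) (continuous_expSum_mul J B a)
    (fun w => differentiable_expSum J B _) (fun p hp => hT p.1 hp.1) hδ
  refine ⟨ε, hε, fun ρ hA hρ => ?_⟩
  set w : ℕ → ℂ := fun j => exp ((ρ.im * B j : ℝ) * I)
  have hshift : ∀ z : ℂ, expSum J B (a * w) z = expSum J B a (z + ρ.im * I) := fun z =>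
    (expSum_add_mul_I J B a z ρ.im).symm
  have hw : w ∈ T := fun j _ => by simpa [w] using norm_exp_ofReal_mul_I (ρ.im * B j)
  have hre : (ρ.re : ℂ) ∈ closedBall 0 A := by simpa using hA
  have := hK (w, ρ.re) ⟨hw, hre⟩ fun z hz hzero => by
    rw [hshift] at hzero
    refine (hρ _ hzero).not_gt ?_
    calc dist ρ (z + ρ.im * I) = dist (ρ.re + ρ.im * I) (z + ρ.im * I) := by rw [re_add_im]
      _ = dist (ρ.re : ℂ) z := dist_add_right _ _ _
      _ < δ := mem_ball'.1 hz
  rwa [hshift, re_add_im] at this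

theorem exponential_sum_bounded_from_zero_away_from_roots_general
    (J : ℕ) (B : ℕ → ℝ) (b : ℕ → ℂ)
    (hB0 : B 0 = 0) (hBmono : ∀ i, i < J → B i < B (i + 1))
    (hb0 : b 0 ≠ 0) (hbJ : b J ≠ 0)
    (Φ : ℂ → ℂ)
    (hΦ : ∀ ρ : ℂ, Φ ρ = ∑ j ∈ Finset.range (J + 1), b j * Complex.exp (ρ * (B j : ℂ))) :
    ∀ δ : ℝ, 0 < δ → ∃ ε : ℝ, 0 < ε ∧
      ∀ ρ : ℂ, (∀ z : ℂ, Φ z = 0 → δ ≤ dist ρ z) → ε ≤ ‖Φ ρ‖ := by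
  intro δ hδ
  obtain rfl : Φ = expSum J B b := funext hΦ
  have hB : StrictMonoOn B (Set.Iic J) := strictMonoOn_Iic_of_lt_succ hBmono
  obtain ⟨A, c, hc, houter⟩ := exists_pos_le_norm_expSum_of_le_abs_re hB0 hB hb0 hbJ
  obtain ⟨ε, hε, hinner⟩ := exists_pos_le_norm_expSum_of_abs_re_le hB0 hB hb0 hbJ A hδ
  refine ⟨min ε c, lt_min hε hc, fun ρ hρ => ?_⟩
  rcases le_total A |ρ.re| with hA | hA
  · exact (min_le_right _ _).trans (houter ρ hA)
  · exact (min_le_left _ _).trans (hinner ρ hA hρ)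

/-- **Langer's strip theorem (lower-bound part).**
Away from its zero set, an exponential sum `Φ(ρ) = ∑_{j=0}^J b_j e^{ρ B_j}`
(with `B₀ = 0 < B₁ < ⋯ < B_J`, `b₀ ≠ 0`, `b_J ≠ 0`, `J ≥ 1`) is uniformly
bounded away from zero: for every `δ > 0` there is `ε > 0` such that any point
at distance at least `δ` from every zero of `Φ` satisfies `|Φ(ρ)| ≥ ε`. -/
theorem exponential_sum_bounded_from_zero_away_from_roots
    (J : ℕ) (hJ : 1 ≤ J) (B : ℕ → ℝ) (b : ℕ → ℂ)
    (hB0 : B 0 = 0) (hBmono : ∀ i, i < J → B i < B (i + 1))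
    (hb0 : b 0 ≠ 0) (hbJ : b J ≠ 0)
    (Φ : ℂ → ℂ)
    (hΦ : ∀ ρ : ℂ, Φ ρ = ∑ j ∈ Finset.range (J + 1), b j * Complex.exp (ρ * (B j : ℂ))) :
    ∀ δ : ℝ, 0 < δ → ∃ ε : ℝ, 0 < ε ∧
      ∀ ρ : ℂ, (∀ z : ℂ, Φ z = 0 → δ ≤ dist ρ z) → ε ≤ ‖Φ ρ‖ :=
  exponential_sum_bounded_from_zero_away_from_roots_general J B b hB0 hBmono hb0 hbJ Φ hΦ
end

section
/- Let J ≥ 1, let B₀ = 0 < B₁ < ⋯ < B_J be real numbers, and let b₀, …, b_J be complex numbers with b₀ ≠ 0 and b_J ≠ 0. Then the exponential sum Φ(ρ) = ∑_{j=0}^{J} b_j e^{ρ B_j} has infinitely many zeros in the complex plane (hence a stratified N-layer medium has infinitely many natural modes). -/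
/-! If `Φ` had only finitely many zeros then, being entire of exponential type
(`‖Φ z‖ ≤ C e^{β ‖z‖}`), it would factor as `Φ z = P z * e^{a z + c}` with `P` a polynomial:
divide out the zeros, write the zero-free quotient as `e^h`, bound `Re h` linearly, and conclude
that `h` is affine by Borel–Carathéodory and Liouville. On the real axis the dominant terms
`b_J e^{t B_J}` (as `t → +∞`) and `b_0 e^{t B_0}` (as `t → -∞`) then force
`B_J ≤ Re a ≤ B_0`, contradicting `B_0 < B_J`. -/

open Complex Finset Filter Topology Metric Bornology Polynomial Asymptotics

section

variable {f g h : ℂ → ℂ}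

theorem differentiable_dslope (hf : Differentiable ℂ f) (z₀ : ℂ) :
    Differentiable ℂ (dslope f z₀) :=
  differentiableOn_univ.1 <| (differentiableOn_dslope univ_mem).2 hf.differentiableOn

theorem Differentiable.iterate_dslope (hf : Differentiable ℂ f) (z₀ : ℂ) (n : ℕ) :
    Differentiable ℂ ((Function.swap dslope z₀)^[n] f) := by
  induction n with
  | zero => exact hf
  | succ n ih =>
    rw [Function.iterate_succ_apply']
    exact differentiable_dslope ih z₀

theorem Differentiable.exists_eq_sub_pow_mul (hf : Differentiable ℂ f) {w : ℂ} (hw : f w ≠ 0)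
    (z₀ : ℂ) : ∃ m : ℕ, ∃ g : ℂ → ℂ, Differentiable ℂ g ∧ g z₀ ≠ 0 ∧
      ∀ z, f z = (z - z₀) ^ m * g z := by
  obtain ⟨p, hp⟩ := hf.analyticAt z₀
  have hp0 : p ≠ 0 := by
    rintro rfl
    refine hw <| (analyticOnNhd_univ_iff_differentiable.2 hf)
      |>.eqOn_zero_of_preconnected_of_eventuallyEq_zero isPreconnected_univ (Set.mem_univ z₀)
      (hp.locally_zero_iff.2 rfl) (Set.mem_univ w)
  exact ⟨p.order, _, hf.iterate_dslope z₀ p.order, hp.iterate_dslope_fslope_ne_zero hp0,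
    hp.eq_pow_order_mul_iterate_dslope⟩

theorem Differentiable.exists_eq_eval_mul_of_finite_zeros (hf : Differentiable ℂ f)
    (hfin : {z | f z = 0}.Finite) : ∃ P : ℂ[X], P ≠ 0 ∧ ∃ g : ℂ → ℂ, Differentiable ℂ g ∧
      (∀ z, g z ≠ 0) ∧ ∀ z, f z = P.eval z * g z := by
  obtain ⟨S, hS⟩ := hfin.exists_finset_coe
  clear hfin
  induction S using Finset.induction_on generalizing f with
  | empty =>
    refine ⟨1, one_ne_zero, f, hf, fun z hz => ?_, by simp⟩
    simpa using hS.symm.subset hz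
  | insert a S ha ih =>
    obtain ⟨w, hw⟩ := (hS ▸ (insert a S).finite_toSet : {z | f z = 0}.Finite).exists_notMem
    obtain ⟨m, g₁, hg₁, hg₁a, hfg₁⟩ := hf.exists_eq_sub_pow_mul hw a
    have hS₁ : (S : Set ℂ) = {z | g₁ z = 0} := by
      ext z
      have hz := Set.ext_iff.1 hS z
      simp only [Set.mem_ofPred_eq, hfg₁, mul_eq_zero, pow_eq_zero_iff', sub_eq_zero, coe_insert,
        Set.mem_insert_iff, mem_coe] at hz ⊢
      by_cases hza : z = a
      · subst hza
        simp [hg₁a, ha]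
      · simpa [hza] using hz
    obtain ⟨P, hP, g, hg, hg0, hg₁g⟩ := ih hg₁ hS₁
    refine ⟨(X - C a) ^ m * P, mul_ne_zero (pow_ne_zero _ (X_sub_C_ne_zero a)) hP, g, hg, hg0,
      fun z => ?_⟩
    simp [hfg₁, hg₁g, mul_assoc]

theorem Differentiable.exists_eq_exp (hg : Differentiable ℂ g) (hg0 : ∀ z, g z ≠ 0) :
    ∃ h : ℂ → ℂ, Differentiable ℂ h ∧ ∀ z, g z = cexp (h z) := by
  obtain ⟨h, h0, hh⟩ := (hg.deriv.div hg hg0).isExactOn_univ.with_val_at 0 (Complex.log (g 0))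
  have hderiv : ∀ z, HasDerivAt (fun w => g w * cexp (-h w)) 0 z := fun z =>
    ((hg z).hasDerivAt.fun_mul (hh z trivial).fun_neg.cexp).congr_deriv
      (by rw [Pi.div_apply]; field_simp [hg0 z]; ring)
  have hconst : ∀ z, g z * cexp (-h z) = 1 := by
    intro z
    rw [is_const_of_deriv_eq_zero (fun w => (hderiv w).differentiableAt)
      (fun w => (hderiv w).deriv) z 0, h0, exp_neg, exp_log (hg0 0), mul_inv_cancel₀ (hg0 0)]
  refine ⟨h, fun z => (hh z trivial).differentiableAt, fun z => ?_⟩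
  simpa [exp_neg, mul_inv_eq_one₀ (exp_ne_zero _)] using hconst z

theorem Differentiable.exists_eq_mul_add_of_norm_le (hh : Differentiable ℂ h) {A B : ℝ}
    (hle : ∀ z, ‖h z‖ ≤ A + B * ‖z‖) : ∃ a c : ℂ, ∀ z, h z = a * z + c := by
  have hφ : Differentiable ℂ (dslope h 0) := differentiable_dslope hh 0
  have hbound : ∀ w, 1 ≤ ‖w‖ → ‖dslope h 0 w‖ ≤ A + ‖h 0‖ + B := by
    intro w hw
    have hw0 : w ≠ 0 := norm_pos_iff.1 (by linarith)
    have hA : 0 ≤ A + ‖h 0‖ := by linarith [norm_nonneg (h 0), by simpa using hle 0]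
    rw [dslope_of_ne _ hw0, slope_def_field, sub_zero, norm_div, div_le_iff₀ (by linarith)]
    calc ‖h w - h 0‖ ≤ A + B * ‖w‖ + ‖h 0‖ := (norm_sub_le _ _).trans (by linarith [hle w])
      _ ≤ (A + ‖h 0‖ + B) * ‖w‖ := by nlinarith
  have hbdd : IsBounded (Set.range (dslope h 0)) := by
    refine (((isCompact_closedBall (0 : ℂ) 1).image hφ.continuous).isBounded.union
      (isBounded_closedBall (x := 0) (r := A + ‖h 0‖ + B))).subset ?_
    rintro _ ⟨w, rfl⟩
    rcases le_or_gt ‖w‖ 1 with hw | hw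
    · exact Or.inl ⟨w, by simpa using hw, rfl⟩
    · exact Or.inr (by simpa using hbound w hw.le)
  obtain ⟨a, ha⟩ := hφ.exists_eq_const_of_bounded hbdd
  refine ⟨a, h 0, fun z => ?_⟩
  have := sub_smul_dslope h 0 z
  rw [ha, sub_zero, smul_eq_mul, Function.const_apply] at this
  linear_combination -this

theorem Differentiable.norm_le_of_re_le (hh : Differentiable ℂ h) {A B : ℝ} (hB : 0 ≤ B)
    (hre : ∀ z, (h z).re ≤ A + B * ‖z‖) (z : ℂ) :
    ‖h z‖ ≤ 2 * (|A| + 1 + B) + 3 * ‖h 0‖ + 4 * B * ‖z‖ := by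
  set R := 2 * ‖z‖ + 1
  have hmaps : Set.MapsTo h (ball 0 R) {w | w.re ≤ |A| + 1 + B * R} := by
    intro w hw
    have hwR : B * ‖w‖ ≤ B * R := by gcongr; exact (mem_ball_zero_iff.1 hw).le
    show (h w).re ≤ _
    linarith [hre w, le_abs_self A]
  have hbc := borelCaratheodory (by positivity) hh.differentiableOn hmaps (by positivity)
    (mem_ball_zero_iff.2 (by linarith [norm_nonneg z]))
  have hR : R - ‖z‖ = ‖z‖ + 1 := by ring
  rw [hR] at hbc
  have h1 : 2 * (|A| + 1 + B * R) * ‖z‖ / (‖z‖ + 1) ≤ 2 * (|A| + 1 + B * R) := by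
    rw [div_le_iff₀ (by positivity)]
    nlinarith [norm_nonneg z, abs_nonneg A]
  have h2 : ‖h 0‖ * (R + ‖z‖) / (‖z‖ + 1) ≤ 3 * ‖h 0‖ := by
    rw [div_le_iff₀ (by positivity)]
    nlinarith [norm_nonneg z, norm_nonneg (h 0)]
  linarith

theorem Differentiable.exists_eq_mul_add_of_re_le (hh : Differentiable ℂ h) {A B : ℝ}
    (hB : 0 ≤ B) (hre : ∀ z, (h z).re ≤ A + B * ‖z‖) : ∃ a c : ℂ, ∀ z, h z = a * z + c :=
  hh.exists_eq_mul_add_of_norm_le (A := 2 * (|A| + 1 + B) + 3 * ‖h 0‖) (B := 4 * B)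
    (hh.norm_le_of_re_le hB hre)

theorem exists_le_add_mul_norm_of_eventually_cobounded {E : Type*} [NormedAddCommGroup E]
    [ProperSpace E] {u : E → ℝ} (hu : Continuous u) {A B : ℝ} (hB : 0 ≤ B)
    (hev : ∀ᶠ z in cobounded E, u z ≤ A + B * ‖z‖) : ∃ A', ∀ z, u z ≤ A' + B * ‖z‖ := by
  obtain ⟨R, hR⟩ := (isBounded_iff_subset_closedBall 0).1 (isBounded_compl_iff.2 hev)
  obtain ⟨K, hK⟩ := (isCompact_closedBall (0 : E) R).bddAbove_image hu.continuousOn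
  refine ⟨max A K, fun z => ?_⟩
  by_cases hz : z ∈ closedBall 0 R
  · have := hK ⟨z, hz, rfl⟩
    nlinarith [le_max_right A K, norm_nonneg z]
  · have : u z ≤ A + B * ‖z‖ := by_contra fun h => hz (hR h)
    linarith [le_max_left A K]

theorem Polynomial.eventually_re_le_of_norm_eval_mul_exp_le {P : ℂ[X]} (hP : P ≠ 0)
    {M β : ℝ} (hle : ∀ z, ‖P.eval z * cexp (h z)‖ ≤ M * Real.exp (β * ‖z‖)) :
    ∃ A, ∀ᶠ z in cobounded ℂ, (h z).re ≤ A + β * ‖z‖ := by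
  have hO : (fun _ => (1 : ℂ)) =O[cobounded ℂ] P.eval := by
    simpa using isBigO_cobounded_of_degree_le (P := C 1) (Q := P)
      (by simpa using zero_le_degree_iff.2 hP)
  obtain ⟨K, hK0, hK⟩ := hO.exists_pos
  refine ⟨Real.log (K * M), (isBigOWith_iff.1 hK).mono fun z hz => ?_⟩
  have hexp : Real.exp (h z).re ≤ K * M * Real.exp (β * ‖z‖) := by
    calc Real.exp (h z).re ≤ K * ‖P.eval z‖ * Real.exp (h z).re := by
          simpa using mul_le_mul_of_nonneg_right hz (Real.exp_pos (h z).re).le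
      _ = K * ‖P.eval z * cexp (h z)‖ := by rw [norm_mul, norm_exp, mul_assoc]
      _ ≤ K * M * Real.exp (β * ‖z‖) := by
          rw [mul_assoc]; exact mul_le_mul_of_nonneg_left (hle z) hK0.le
  have hKM : 0 < K * M := pos_of_mul_pos_left ((Real.exp_pos _).trans_le hexp) (Real.exp_pos _).le
  rw [← sub_le_iff_le_add, Real.le_log_iff_exp_le hKM, Real.exp_sub, div_le_iff₀ (Real.exp_pos _)]
  exact hexp

theorem Differentiable.exists_eq_eval_mul_exp_of_finite_zeros (hf : Differentiable ℂ f)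
    (hfin : {z | f z = 0}.Finite) {M β : ℝ} (hβ : 0 ≤ β)
    (hle : ∀ z, ‖f z‖ ≤ M * Real.exp (β * ‖z‖)) :
    ∃ (P : ℂ[X]) (a c : ℂ), ∀ z, f z = P.eval z * cexp (a * z + c) := by
  obtain ⟨P, hP, g, hg, hg0, hfg⟩ := hf.exists_eq_eval_mul_of_finite_zeros hfin
  obtain ⟨h, hh, hgh⟩ := hg.exists_eq_exp hg0
  have hfh : ∀ z, f z = P.eval z * cexp (h z) := fun z => by rw [hfg, hgh]
  obtain ⟨A, hA⟩ := P.eventually_re_le_of_norm_eval_mul_exp_le hP (h := h) fun z => hfh z ▸ hle z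
  obtain ⟨A', hA'⟩ :=
    exists_le_add_mul_norm_of_eventually_cobounded (continuous_re.comp hh.continuous) hβ hA
  obtain ⟨a, c, hac⟩ := hh.exists_eq_mul_add_of_re_le hβ hA'
  exact ⟨P, a, c, fun z => by rw [hfh, hac]⟩

end

theorem norm_sum_mul_exp_le {ι : Type*} (s : Finset ι) (b : ι → ℂ) {β : ι → ℝ} {γ : ℝ}
    (hβ : ∀ j ∈ s, |β j| ≤ γ) (z : ℂ) :
    ‖∑ j ∈ s, b j * cexp (z * β j)‖ ≤ (∑ j ∈ s, ‖b j‖) * Real.exp (γ * ‖z‖) := by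
  rw [sum_mul]
  refine (norm_sum_le _ _).trans (sum_le_sum fun j hj => ?_)
  rw [norm_mul, norm_exp, re_mul_ofReal]
  refine mul_le_mul_of_nonneg_left (Real.exp_le_exp.2 ?_) (norm_nonneg _)
  calc z.re * β j ≤ |z.re * β j| := le_abs_self _
    _ = |z.re| * |β j| := abs_mul _ _
    _ ≤ ‖z‖ * γ := by gcongr; exacts [abs_re_le_norm z, hβ j hj]
    _ = γ * ‖z‖ := mul_comm _ _

theorem tendsto_sum_mul_exp_mul_exp_neg_atTop {ι : Type*} {s : Finset ι} (b : ι → ℂ)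
    {β : ι → ℝ} {j₀ : ι} (hj₀ : j₀ ∈ s) (hβ : ∀ j ∈ s, j ≠ j₀ → β j < β j₀) :
    Tendsto (fun t : ℝ => (∑ j ∈ s, b j * cexp (t * β j)) * cexp (-(t * β j₀))) atTop
      (𝓝 (b j₀)) := by
  classical
  simp_rw [sum_mul, mul_assoc, ← exp_add]
  rw [← sum_ite_eq' s j₀ b |>.trans (if_pos hj₀)]
  refine tendsto_finsetSum _ fun j hjs => ?_
  split_ifs with hj
  · subst hj
    simp
  · have hlim : Tendsto (fun t : ℝ => t * (β j - β j₀)) atTop atBot :=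
      tendsto_id.atTop_mul_const_of_neg (sub_neg.2 (hβ j hjs hj))
    have := ((continuous_ofReal.tendsto 0).comp (Real.tendsto_exp_atBot.comp hlim)).const_mul (b j)
    simp only [ofReal_zero, mul_zero] at this
    refine this.congr fun t => ?_
    simp only [Function.comp_apply, ofReal_exp]
    push_cast
    ring_nf

theorem Polynomial.tendsto_eval_mul_exp_atTop_nhds_zero (P : ℂ[X]) {α : ℂ} (hα : α.re < 0) (c : ℂ) :
    Tendsto (fun t : ℝ => P.eval (t : ℂ) * cexp (α * t + c)) atTop (𝓝 0) := by
  have hreal : Tendsto (fun t : ℝ => (t : ℂ)) atTop (cobounded ℂ) :=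
    tendsto_norm_atTop_iff_cobounded.1 (by simpa using tendsto_abs_atTop_atTop)
  have hO : (fun t : ℝ => P.eval (t : ℂ)) =O[atTop] fun t : ℝ => (t : ℂ) ^ P.natDegree := by
    have := (isBigO_cobounded_of_degree_le (P := P) (Q := X ^ P.natDegree)
      (by simp)).comp_tendsto hreal
    simp only [Function.comp_def, eval_pow, eval_X] at this
    exact this
  have ho : (fun t : ℝ => ‖P.eval (t : ℂ)‖) =o[atTop] fun t => Real.exp (-α.re * t) := by
    refine isLittleO_norm_left.2 (hO.trans_isLittleO (isLittleO_norm_left.1 ?_))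
    simpa [norm_pow] using (isLittleO_pow_exp_pos_mul_atTop P.natDegree
      (neg_pos.2 hα)).norm_left
  rw [tendsto_zero_iff_norm_tendsto_zero]
  convert (ho.tendsto_div_nhds_zero).mul_const (Real.exp c.re) using 1
  · ext t
    rw [norm_mul, norm_exp, add_re, re_mul_ofReal, Real.exp_add, neg_mul, Real.exp_neg,
      div_inv_eq_mul, mul_assoc]
  · simp

theorem Polynomial.le_re_of_tendsto_eval_mul_exp {P : ℂ[X]} {a c L : ℂ} {γ : ℝ}
    (h : Tendsto (fun t : ℝ => P.eval (t : ℂ) * cexp (a * t + c) * cexp (-(t * γ))) atTop (𝓝 L))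
    (hL : L ≠ 0) : γ ≤ a.re := by
  by_contra! hlt
  refine hL (tendsto_nhds_unique h ?_)
  convert P.tendsto_eval_mul_exp_atTop_nhds_zero (α := a - γ) (by simpa using hlt) c using 2 with t
  rw [mul_assoc, ← exp_add]
  ring_nf

theorem exponential_sum_infinitely_many_roots_general
    (J : ℕ) (hJ : 1 ≤ J) (B : ℕ → ℝ) (b : ℕ → ℂ)
    (hBmono : ∀ i, i < J → B i < B (i + 1))
    (hb0 : b 0 ≠ 0) (hbJ : b J ≠ 0) :
    {ρ : ℂ | (∑ j ∈ Finset.range (J + 1), b j * Complex.exp (ρ * (B j : ℂ))) = 0}.Infinite := by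
  intro hfin
  have hB : StrictMonoOn B (Set.Iic J) := strictMonoOn_Iic_of_lt_succ hBmono
  have h0 : 0 ∈ Set.Iic J := Nat.zero_le J
  have hJJ : J ∈ Set.Iic J := Set.mem_Iic.2 le_rfl
  have hIic : ∀ j ∈ range (J + 1), j ∈ Set.Iic J := fun j => mem_range_succ_iff.1
  obtain ⟨P, a, c, hfac⟩ := Differentiable.exists_eq_eval_mul_exp_of_finite_zeros (by fun_prop)
    hfin (by positivity) <| norm_sum_mul_exp_le _ b fun j hj => abs_le_max_abs_abs
      (hB.monotoneOn h0 (hIic j hj) (Nat.zero_le j)) (hB.monotoneOn (hIic j hj) hJJ (hIic j hj))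
  have htop : B J ≤ a.re := by
    refine le_re_of_tendsto_eval_mul_exp (P := P) (c := c) ?_ hbJ
    simpa only [hfac] using tendsto_sum_mul_exp_mul_exp_neg_atTop b (self_mem_range_succ J)
      fun j hj hjJ => hB (hIic j hj) hJJ (lt_of_le_of_ne (hIic j hj) hjJ)
  have hbot : -B 0 ≤ (-a).re := by
    refine le_re_of_tendsto_eval_mul_exp (P := P.comp (-X)) (c := c) ?_ hb0
    refine (tendsto_sum_mul_exp_mul_exp_neg_atTop b (β := fun j => -B j) (mem_range.2 (by omega))
      fun j hj hj0 => neg_lt_neg (hB h0 (hIic j hj) (Nat.pos_of_ne_zero hj0))).congr fun t => ?_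
    simpa using hfac (-t)
  linarith [hB h0 hJJ (by omega : 0 < J), neg_re a]

/-- An exponential sum `Φ(ρ) = ∑_{j=0}^J b_j e^{ρ B_j}` with real exponents
`B₀ = 0 < B₁ < ⋯ < B_J`, `b₀ ≠ 0`, `b_J ≠ 0` and `J ≥ 1` has infinitely many
zeros in the complex plane (hence a stratified N-layer medium has infinitely
many natural modes). -/
theorem exponential_sum_infinitely_many_roots
    (J : ℕ) (hJ : 1 ≤ J) (B : ℕ → ℝ) (b : ℕ → ℂ)
    (hB0 : B 0 = 0) (hBmono : ∀ i, i < J → B i < B (i + 1))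
    (hb0 : b 0 ≠ 0) (hbJ : b J ≠ 0) :
    {ρ : ℂ | (∑ j ∈ Finset.range (J + 1), b j * Complex.exp (ρ * (B j : ℂ))) = 0}.Infinite :=
  exponential_sum_infinitely_many_roots_general J hJ B b hBmono hb0 hbJ
end

section
/- Let ω₀, Γ, f, d, c > 0 and let ω* ∈ ℂ be either root of the quadratic ω² + iΓω − ω₀² = 0 (these are the resonances of the Lorentz refractive index; note ω* ≠ 0). Then for every ε > 0 the set of complex numbers ω with |ω − ω*| < ε for which there exists a positive integer m with (f d²/c²)·ω² = m²π²·(ω₀² − ω² − iΓω) is infinite. That is, the natural mode frequencies of a single dispersive slab cluster at each resonance of the refractive index. -/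
/-!
Away from `ω = 0` the mode equation says `N(ω) / ω² = K / (m²π²)`, where
`N(ω) = ω₀² − ω² − iΓω` and `K = f d²/c²`. The ratio `N(ω) / ω²` is analytic at the resonance
`ω*`, vanishes there, and is not locally constant (else the entire function `N` would vanish
identically, but `N(0) = ω₀² ≠ 0`). By the open mapping theorem it maps every neighbourhood of
`ω*` onto a neighbourhood of `0`, which contains all but finitely many of the pairwise distinct
values `K / (m²π²) → 0`; their preimages are pairwise distinct mode frequencies.
-/

open Complex Real Filter Topology Set Function

theorem AnalyticAt.infinite_inter_preimage_range {g : ℂ → ℂ} {z₀ : ℂ} (hg : AnalyticAt ℂ g z₀)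
    (hg_nonconst : ¬ ∀ᶠ z in 𝓝 z₀, g z = g z₀) {v : ℕ → ℂ} (hv : Injective v)
    (hv_lim : Tendsto v atTop (𝓝 (g z₀))) {U : Set ℂ} (hU : U ∈ 𝓝 z₀) :
    (U ∩ g ⁻¹' range v).Infinite := by
  have hgU : g '' U ∈ 𝓝 (g z₀) :=
    hg.eventually_constant_or_nhds_le_map_nhds.resolve_left hg_nonconst (image_mem_map hU)
  have hhits : {n | v n ∈ g '' U}.Infinite :=
    Nat.frequently_atTop_iff_infinite.1 (hv_lim.eventually_mem hgU).frequently
  refine Infinite.of_image g ?_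
  rw [image_inter_preimage]
  exact (hhits.image hv.injOn).mono <| by rintro _ ⟨n, hn, rfl⟩; exact ⟨hn, n, rfl⟩

theorem mul_sq_eq_of_div_eq_div_sq {F : Type*} [Field F] {K μ x y : F} (hK : K ≠ 0)
    (hμ : μ ≠ 0) (h : K / μ = y / x ^ 2) : K * x ^ 2 = μ * y := by
  have hx : x ≠ 0 := by
    rintro rfl
    simp [hK, hμ] at h
  rw [div_eq_div_iff hμ (pow_ne_zero 2 hx)] at h
  linear_combination h

theorem injective_div_natCast_succ_sq_mul {K c : ℂ} (hK : K ≠ 0) (hc : c ≠ 0) :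
    Injective fun n : ℕ => K / (((n + 1 : ℕ) : ℂ) ^ 2 * c) := by
  intro m n h
  have hsq : ((m + 1 : ℕ) : ℂ) ^ 2 = ((n + 1 : ℕ) : ℂ) ^ 2 :=
    mul_right_cancel₀ hc (inv_injective (mul_left_cancel₀ hK h))
  exact Nat.succ_injective (Nat.pow_left_injective two_ne_zero (by exact_mod_cast hsq))

theorem tendsto_div_natCast_succ_sq_mul (K c : ℂ) :
    Tendsto (fun n : ℕ => K / (((n + 1 : ℕ) : ℂ) ^ 2 * c)) atTop (𝓝 0) := by
  convert ((tendsto_one_div_add_atTop_nhds_zero_nat (𝕜 := ℂ)).pow 2).const_mul (K / c) using 1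
  · ext n
    push_cast
    rw [one_div, inv_pow, ← div_eq_mul_inv, div_div, mul_comm c]
  · simp

section LorentzResonance

variable (a b : ℂ)

/-- With `a = iΓ` and `b = ω₀²` this is the denominator of `n²(ω) − 1`. -/
def lorentzDenom (ω : ℂ) : ℂ := b - ω ^ 2 - a * ω

theorem analyticOnNhd_lorentzDenom : AnalyticOnNhd ℂ (lorentzDenom a b) univ :=
  fun _ _ => by unfold lorentzDenom; fun_prop

variable {a b}

theorem lorentzDenom_not_eventually_eq_zero (hb : b ≠ 0) (z₀ : ℂ) :
    ¬ ∀ᶠ z in 𝓝 z₀, lorentzDenom a b z = 0 := fun h => hb <| by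
  simpa [lorentzDenom] using congrFun
    ((analyticOnNhd_lorentzDenom a b).eq_of_eventuallyEq analyticOnNhd_const h) 0

theorem ne_zero_of_lorentzDenom_eq_zero (hb : b ≠ 0) {z : ℂ} (hz : lorentzDenom a b z = 0) :
    z ≠ 0 := by
  rintro rfl
  simp [lorentzDenom, hb] at hz

theorem not_eventually_lorentzDenom_div_sq_eq (hb : b ≠ 0) {ωs : ℂ}
    (hωs : lorentzDenom a b ωs = 0) :
    ¬ ∀ᶠ ω in 𝓝 ωs, lorentzDenom a b ω / ω ^ 2 = lorentzDenom a b ωs / ωs ^ 2 := by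
  intro h
  refine lorentzDenom_not_eventually_eq_zero (a := a) hb ωs ?_
  filter_upwards [h, eventually_ne_nhds (ne_zero_of_lorentzDenom_eq_zero hb hωs)] with ω hω hω0
  simpa [hωs, hω0] using hω

theorem infinite_setOf_lorentz_mode {K ωs : ℂ} (hK : K ≠ 0) (hb : b ≠ 0)
    (hωs : lorentzDenom a b ωs = 0) {U : Set ℂ} (hU : U ∈ 𝓝 ωs) :
    {ω | ω ∈ U ∧ ∃ m : ℕ, 0 < m ∧
      K * ω ^ 2 = (m : ℂ) ^ 2 * (π : ℂ) ^ 2 * lorentzDenom a b ω}.Infinite := by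
  have hπ : (π : ℂ) ^ 2 ≠ 0 := pow_ne_zero 2 (ofReal_ne_zero.2 pi_ne_zero)
  have hωs0 := ne_zero_of_lorentzDenom_eq_zero hb hωs
  have hratio : AnalyticAt ℂ (fun ω => lorentzDenom a b ω / ω ^ 2) ωs :=
    (analyticOnNhd_lorentzDenom a b ωs trivial).div (by fun_prop) (pow_ne_zero 2 hωs0)
  have hlim : Tendsto (fun n : ℕ => K / (((n + 1 : ℕ) : ℂ) ^ 2 * (π : ℂ) ^ 2)) atTop
      (𝓝 (lorentzDenom a b ωs / ωs ^ 2)) := by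
    rw [hωs, zero_div]
    exact tendsto_div_natCast_succ_sq_mul K _
  refine (hratio.infinite_inter_preimage_range (not_eventually_lorentzDenom_div_sq_eq hb hωs)
    (injective_div_natCast_succ_sq_mul hK hπ) hlim hU).mono ?_
  rintro ω ⟨hωU, n, hn⟩
  refine ⟨hωU, n + 1, n.succ_pos, mul_sq_eq_of_div_eq_div_sq hK ?_ hn⟩
  exact mul_ne_zero (pow_ne_zero 2 (Nat.cast_ne_zero.2 n.succ_ne_zero)) hπ

end LorentzResonance

theorem natural_modes_cluster_at_resonance_general
    (ω₀ Γ f d c : ℝ) (hω₀ : 0 < ω₀) (hf : 0 < f) (hd : 0 < d) (hc : 0 < c)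
    (ωs : ℂ) (hωs : ωs ^ 2 + Complex.I * (Γ : ℂ) * ωs - (ω₀ : ℂ) ^ 2 = 0) :
    ∀ ε : ℝ, 0 < ε →
      {ω : ℂ | ‖ω - ωs‖ < ε ∧ ∃ m : ℕ, 0 < m ∧
        ((f : ℂ) * (d : ℂ) ^ 2 / (c : ℂ) ^ 2) * ω ^ 2 =
          (m : ℂ) ^ 2 * (Real.pi : ℂ) ^ 2 *
            ((ω₀ : ℂ) ^ 2 - ω ^ 2 - Complex.I * (Γ : ℂ) * ω)}.Infinite := by
  intro ε hε
  have hK : (f : ℂ) * (d : ℂ) ^ 2 / (c : ℂ) ^ 2 ≠ 0 := by simp [hf.ne', hd.ne', hc.ne']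
  have hb : (ω₀ : ℂ) ^ 2 ≠ 0 := by simp [hω₀.ne']
  have hroot : lorentzDenom (I * Γ) (ω₀ ^ 2) ωs = 0 := by
    unfold lorentzDenom
    linear_combination -hωs
  refine (infinite_setOf_lorentz_mode hK hb hroot (Metric.ball_mem_nhds ωs hε)).mono ?_
  rintro ω ⟨hω, hmode⟩
  exact ⟨mem_ball_iff_norm.1 hω, hmode⟩

/-- **Clustering of natural mode frequencies at a Lorentz resonance.**
For a single dispersive slab (Lorentz model with resonance frequency `ω₀ > 0`,
damping `Γ > 0`, oscillator strength `f > 0`, thickness `d > 0`, light speed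
`c > 0`), let `ω*` be either root of `ω² + iΓω − ω₀² = 0`. Then every
neighbourhood of `ω*` contains infinitely many solutions `ω` of the natural-mode
equation `(f d²/c²)·ω² = m²π²·(ω₀² − ω² − iΓω)` (for some positive integer `m`):
the natural frequencies cluster at each resonance of the refractive index. -/
theorem natural_modes_cluster_at_resonance
    (ω₀ Γ f d c : ℝ) (hω₀ : 0 < ω₀) (hΓ : 0 < Γ) (hf : 0 < f) (hd : 0 < d) (hc : 0 < c)
    (ωs : ℂ) (hωs : ωs ^ 2 + Complex.I * (Γ : ℂ) * ωs - (ω₀ : ℂ) ^ 2 = 0) :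
    ∀ ε : ℝ, 0 < ε →
      {ω : ℂ | ‖ω - ωs‖ < ε ∧ ∃ m : ℕ, 0 < m ∧
        ((f : ℂ) * (d : ℂ) ^ 2 / (c : ℂ) ^ 2) * ω ^ 2 =
          (m : ℂ) ^ 2 * (Real.pi : ℂ) ^ 2 *
            ((ω₀ : ℂ) ^ 2 - ω ^ 2 - Complex.I * (Γ : ℂ) * ω)}.Infinite :=
  natural_modes_cluster_at_resonance_general ω₀ Γ f d c hω₀ hf hd hc ωs hωs
end

section
/- Let A, d > 0 (units with c = 1) and for each positive integer m define ω_m = (1/d)·(mπ + i·log(4m²π²/(A d²))). Then sin( −i·Log(4ω_m²/A) + (ω_m − A/(2ω_m))·d ) → 0 as m → ∞, where Log denotes the principal branch of the complex logarithm; i.e., the ω_m are asymptotic roots of the large-frequency natural mode equation of a single dispersive slab. -/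
/-!
Write `z_m = d ω_m = mπ + i L_m`, where `exp L_m = 4m²π²/(Ad²)`. Then
`4ω_m²/A = exp L_m · (z_m/(mπ))²` with a positive real first factor, so the principal logarithm
splits as `L_m + Log((z_m/(mπ))²)`, and `−i L_m` cancels the imaginary part of `z_m`: the argument
of `sin` is exactly `mπ − i Log((z_m/(mπ))²) − Ad²/(2z_m)`. As `L_m = O(log m)`, `z_m/(mπ) → 1`
and `|z_m| → ∞`, so the argument is `mπ + o(1)`, and `|sin(mπ + ε)| = |sin ε| → 0`.
-/

open Complex Real Filter Topology Bornology

theorem Complex.tendsto_sin_of_tendsto_sub_nat_mul_pi {ι : Type*} {l : Filter ι} {f : ι → ℂ}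
    {k : ι → ℕ} (h : Tendsto (fun i => f i - k i * π) l (𝓝 0)) :
    Tendsto (fun i => sin (f i)) l (𝓝 0) := by
  have hnorm (i : ι) : ‖sin (f i)‖ = ‖sin (f i - k i * π)‖ := by
    simp [sin_antiperiodic.sub_nat_mul_eq]
  rw [tendsto_zero_iff_norm_tendsto_zero]
  simpa [hnorm] using ((continuous_sin.tendsto' 0 0 sin_zero).comp h).norm

theorem Real.tendsto_log_const_mul_sq_div_atTop {c : ℝ} (hc : c ≠ 0) :
    Tendsto (fun x => Real.log (c * x ^ 2) / x) atTop (𝓝 0) := by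
  have hlog : Tendsto (fun x => Real.log x / x) atTop (𝓝 0) := by
    simpa using tendsto_pow_log_div_mul_add_atTop 1 0 1 one_ne_zero
  have hsum := (tendsto_const_nhds (x := Real.log c).div_atTop tendsto_id).add (hlog.const_mul 2)
  rw [mul_zero, add_zero] at hsum
  refine hsum.congr' ?_
  filter_upwards [eventually_ne_atTop 0] with x hx
  rw [Real.log_mul hc (pow_ne_zero 2 hx), Real.log_pow]
  simp only [id]
  push_cast
  ring

section ComplexFromParts

variable {ι : Type*} {l : Filter ι} {x L : ι → ℝ}

theorem tendsto_ofReal_add_I_mul_cobounded (hx : Tendsto x l atTop) :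
    Tendsto (fun i => (x i : ℂ) + I * L i) l (cobounded ℂ) := by
  rw [← tendsto_norm_atTop_iff_cobounded]
  refine tendsto_atTop_mono (fun i => ?_) (tendsto_abs_atTop_atTop.comp hx)
  simpa using abs_re_le_norm ((x i : ℂ) + I * L i)

theorem tendsto_ofReal_add_I_mul_div_ofReal (hx : ∀ᶠ i in l, x i ≠ 0)
    (hL : Tendsto (fun i => L i / x i) l (𝓝 0)) :
    Tendsto (fun i => ((x i : ℂ) + I * L i) / x i) l (𝓝 1) := by
  have h := ((continuous_ofReal.tendsto 0).comp hL).const_mul I |>.const_add 1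
  rw [ofReal_zero, mul_zero, add_zero] at h
  refine h.congr' ?_
  filter_upwards [hx] with i hi
  have : (x i : ℂ) ≠ 0 := by exact_mod_cast hi
  simp only [Function.comp_apply, ofReal_div]
  field_simp

theorem tendsto_neg_I_mul_log_sq_sub_div (hx : Tendsto x l atTop)
    (hL : Tendsto (fun i => L i / x i) l (𝓝 0)) (c : ℂ) :
    Tendsto (fun i => -I * Complex.log ((((x i : ℂ) + I * L i) / x i) ^ 2)
      - c / (2 * ((x i : ℂ) + I * L i))) l (𝓝 0) := by
  have hlog : Tendsto (fun i => Complex.log ((((x i : ℂ) + I * L i) / x i) ^ 2)) l (𝓝 0) := by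
    have hsq := (tendsto_ofReal_add_I_mul_div_ofReal (hx.eventually_ne_atTop 0) hL).pow 2
    rw [one_pow] at hsq
    have h := (continuousAt_clog (by simp)).tendsto.comp hsq
    rwa [Complex.log_one] at h
  have hinv := tendsto_inv₀_cobounded.comp (tendsto_ofReal_add_I_mul_cobounded hx (L := L))
  have h := (hlog.const_mul (-I)).sub (hinv.const_mul (c / 2))
  rw [mul_zero, mul_zero, sub_zero] at h
  refine h.congr fun i => ?_
  rw [Function.comp_apply, ← div_eq_mul_inv, div_div]

end ComplexFromParts

theorem neg_I_mul_log_add_sub_div_mul_eq {A d x L : ℝ} {ω : ℂ} (hx : x ≠ 0)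
    (hL : Real.exp L = 4 * x ^ 2 / (A * d ^ 2)) (hω : ω = 1 / d * (x + I * L)) :
    -I * Complex.log (4 * ω ^ 2 / A) + (ω - A / (2 * ω)) * d
      = x + (-I * Complex.log (((x + I * L) / x) ^ 2) - A * d ^ 2 / (2 * (x + I * L))) := by
  have hAd : A * d ^ 2 ≠ 0 := by
    rintro h
    rw [h, div_zero] at hL
    exact (Real.exp_pos L).ne' hL
  have hd : (d : ℂ) ≠ 0 := by
    exact_mod_cast (pow_ne_zero_iff two_ne_zero).mp (right_ne_zero_of_mul hAd)
  have hz : (x : ℂ) + I * L ≠ 0 := fun h => by simpa [hx] using congrArg re h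
  have hxC : (x : ℂ) ≠ 0 := by exact_mod_cast hx
  have hsplit : 4 * ω ^ 2 / A = (Real.exp L : ℂ) * ((x + I * L) / x) ^ 2 := by
    rw [hL, hω]
    push_cast
    field_simp
  rw [hsplit, log_ofReal_mul (Real.exp_pos L) (pow_ne_zero 2 (div_ne_zero hz hxC)),
    Real.log_exp, hω]
  field_simp
  ring

/-- **Asymptotic large-frequency natural modes of a dispersive slab.**
Let `A, d > 0` (units with `c = 1`) and set
`ω_m = (1/d)(mπ + i log(4m²π²/(Ad²)))` for positive integers `m`. Then
`sin(−i Log(4ω_m²/A) + (ω_m − A/(2ω_m)) d) → 0` as `m → ∞`, where `Log` is the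
principal branch of the complex logarithm: the `ω_m` are asymptotic roots of the
large-frequency natural mode equation. -/
theorem asymptotic_large_frequency_natural_modes
    (A d : ℝ) (hA : 0 < A) (hd : 0 < d)
    (ω : ℕ → ℂ)
    (hω : ∀ m : ℕ, ω m = (1 / (d : ℂ)) *
      ((m : ℂ) * (Real.pi : ℂ) +
        Complex.I * (Real.log (4 * (m : ℝ) ^ 2 * Real.pi ^ 2 / (A * d ^ 2)) : ℂ))) :
    Tendsto
      (fun m : ℕ => Complex.sin
        (-Complex.I * Complex.log (4 * (ω m) ^ 2 / (A : ℂ)) +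
          (ω m - (A : ℂ) / (2 * ω m)) * (d : ℂ)))
      atTop (nhds 0) := by
  set L : ℕ → ℝ := fun m => Real.log (4 * (m : ℝ) ^ 2 * π ^ 2 / (A * d ^ 2))
  have hx : Tendsto (fun m : ℕ => (m : ℝ) * π) atTop atTop :=
    tendsto_natCast_atTop_atTop.atTop_mul_const pi_pos
  have hL : Tendsto (fun m => L m / (m * π)) atTop (𝓝 0) := by
    refine ((tendsto_log_const_mul_sq_div_atTop (c := 4 / (A * d ^ 2)) (by positivity)).comp
      hx).congr fun m => ?_
    simp only [L, Function.comp_apply]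
    ring_nf
  refine tendsto_sin_of_tendsto_sub_nat_mul_pi (k := fun m => m)
    ((tendsto_neg_I_mul_log_sq_sub_div hx hL (A * d ^ 2)).congr' ?_)
  filter_upwards [eventually_ne_atTop 0] with m hm
  have hmπ : (m : ℝ) * π ≠ 0 := mul_ne_zero (Nat.cast_ne_zero.mpr hm) pi_ne_zero
  have hexp : Real.exp (L m) = 4 * (m * π) ^ 2 / (A * d ^ 2) := by
    rw [Real.exp_log (by positivity)]
    ring
  rw [neg_I_mul_log_add_sub_div_mul_eq hmπ hexp (by rw [hω m]; push_cast; rfl)]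
  push_cast
  ring
end

section
/- Let g₀, g₁, …, g_M be real numbers and β₁, …, β_{M−1} be real numbers, and for a complex frequency ω define (Z_m(ω), N_m(ω)) by Wolter's recursion with δ_m = β_m·ω. Then for every 1 ≤ m ≤ M and every ω ∈ ℂ one has N_m(−conj(ω)) = conj(N_m(ω)) and Z_m(−conj(ω)) = conj(Z_m(ω)). Consequently the set of natural mode frequencies of a non-dispersive stratified N-layer medium is symmetric under ω ↦ −conj(ω): if N_M(ω) = 0 then N_M(−conj(ω)) = 0. -/
open Complex

/-- **Symmetry `ω ↦ −ω̄` of the natural-mode frequencies of a non-dispersive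
stratified N-layer medium.** With real refractive-index parameters `g_m` and real
phase coefficients `β_m` (so `δ_m = β_m ω`), Wolter's recursion satisfies
`N_m(−ω̄) = conj(N_m(ω))` and `Z_m(−ω̄) = conj(Z_m(ω))` for all `1 ≤ m ≤ M`;
consequently if `N_M(ω) = 0` then `N_M(−ω̄) = 0`. -/
theorem wolter_natural_frequencies_symmetric
    (M : ℕ) (hM : 1 ≤ M) (g : ℕ → ℝ) (β : ℕ → ℝ)
    (Z N : ℕ → ℂ → ℂ)
    (hZ1 : ∀ ω : ℂ, Z 1 ω = (g 1 : ℂ) - (g 0 : ℂ))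
    (hN1 : ∀ ω : ℂ, N 1 ω = (g 1 : ℂ) + (g 0 : ℂ))
    (hZrec : ∀ m : ℕ, 2 ≤ m → m ≤ M → ∀ ω : ℂ,
      Z m ω = ((g m : ℂ) - (g (m - 1) : ℂ)) *
                Complex.exp (-Complex.I * ((β (m - 1) : ℂ) * ω)) * N (m - 1) ω +
              ((g m : ℂ) + (g (m - 1) : ℂ)) *
                Complex.exp (Complex.I * ((β (m - 1) : ℂ) * ω)) * Z (m - 1) ω)
    (hNrec : ∀ m : ℕ, 2 ≤ m → m ≤ M → ∀ ω : ℂ,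
      N m ω = ((g m : ℂ) + (g (m - 1) : ℂ)) *
                Complex.exp (-Complex.I * ((β (m - 1) : ℂ) * ω)) * N (m - 1) ω +
              ((g m : ℂ) - (g (m - 1) : ℂ)) *
                Complex.exp (Complex.I * ((β (m - 1) : ℂ) * ω)) * Z (m - 1) ω) :
    (∀ m : ℕ, 1 ≤ m → m ≤ M → ∀ ω : ℂ,
      N m (-(starRingEnd ℂ ω)) = starRingEnd ℂ (N m ω) ∧
      Z m (-(starRingEnd ℂ ω)) = starRingEnd ℂ (Z m ω)) ∧
    ∀ ω : ℂ, N M ω = 0 → N M (-(starRingEnd ℂ ω)) = 0 := by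

  have key : ∀ m : ℕ, 1 ≤ m → m ≤ M → ∀ ω : ℂ,
      N m (-(starRingEnd ℂ ω)) = starRingEnd ℂ (N m ω) ∧
      Z m (-(starRingEnd ℂ ω)) = starRingEnd ℂ (Z m ω) := by
    intro m
    induction m with
    | zero => intro h; omega
    | succ k ih =>
      intro h1 hle ω
      rcases Nat.lt_or_ge k 1 with hk | hk
      · interval_cases k
        simp [hN1, hZ1]
      · have h2 : 2 ≤ k + 1 := by omega
        have hkM : k ≤ M := by omega
        obtain ⟨hNk, hZk⟩ := ih hk hkM ω
        have hsub : (k + 1) - 1 = k := by omega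
        have hexp1 : Complex.exp (-Complex.I * ((β k : ℂ) * (-(starRingEnd ℂ ω)))) =
            starRingEnd ℂ (Complex.exp (-Complex.I * ((β k : ℂ) * ω))) := by
          rw [← Complex.exp_conj]
          ring_nf
          simp [map_mul, Complex.conj_I]
        have hexp2 : Complex.exp (Complex.I * ((β k : ℂ) * (-(starRingEnd ℂ ω)))) =
            starRingEnd ℂ (Complex.exp (Complex.I * ((β k : ℂ) * ω))) := by
          rw [← Complex.exp_conj]
          ring_nf
          simp [map_mul, Complex.conj_I]
        constructor
        · rw [hNrec (k+1) h2 hle, hNrec (k+1) h2 hle, hsub, hexp1, hexp2, hNk, hZk]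
          simp [map_add, map_mul]
        · rw [hZrec (k+1) h2 hle, hZrec (k+1) h2 hle, hsub, hexp1, hexp2, hNk, hZk]
          simp [map_add, map_mul]
  refine ⟨key, fun ω h => ?_⟩
  rw [(key M hM le_rfl ω).1, h, map_zero]
end
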